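/- arXiv:math/0502293 — 7 statements merged into one kernel-verified Lean document; each statement's English description precedes it below -/
import Mathlib

section
/- Let G be a group, H a normal subgroup of G, and X ⊆ G a right transversal of H in G (i.e., for every g ∈ G there exists x ∈ X with g·x⁻¹ ∈ H). Then for every subset A ⊆ H, the normal closure of A in G equals the normal closure, computed in H, of the set { x a x⁻¹ : x ∈ X, a ∈ A }; that is, ⟪A⟫_G = ⟪{ x a x⁻¹ : x ∈ X, a ∈ A }⟫_H as subgroups of G. -/
/-!
Write `N` for the image in `G` of the normal closure in `H` of the conjugates `x a x⁻¹`
(`x ∈ X`, `a ∈ A`). Clearly `N ≤ ⟪A⟫_G`. Conversely, `N` is normal in `G`: for `g ∈ G` choose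
`y ∈ X` with `h := g x y⁻¹ ∈ H`; then `g (x a x⁻¹) g⁻¹ = h (y a y⁻¹) h⁻¹` lies in `N`.
Since `A` is contained in the `G`-conjugates of those generators, `⟪A⟫_G ≤ N`.
-/

namespace Subgroup

variable {G : Type*} [Group G]

def conjugatesBy (H : Subgroup G) (X A : Set G) : Set H :=
  {h : H | ∃ x ∈ X, ∃ a ∈ A, (h : G) = x * a * x⁻¹}

theorem normal_map_subtype_normalClosure {H : Subgroup G} [H.Normal] {T : Set H}
    (hT : ∀ g : G, MulAut.conjNormal g '' T ⊆ normalClosure T) :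
    ((normalClosure T).map H.subtype).Normal := by
  refine ⟨?_⟩
  rintro _ ⟨t, ht, rfl⟩ g
  have hle : (normalClosure T).map (MulAut.conjNormal g).toMonoidHom ≤ normalClosure T :=
    (map_normalClosure T _ (MulAut.conjNormal g).surjective).trans_le
      (normalClosure_le_normal (hT g))
  exact ⟨MulAut.conjNormal g t, hle (mem_map_of_mem _ ht), rfl⟩

theorem conjNormal_image_conjugatesBy_subset {H : Subgroup G} [hH : H.Normal] {X A : Set G}
    (hX : ∀ g : G, ∃ x ∈ X, g * x⁻¹ ∈ H) (hA : A ⊆ H) (g : G) :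
    MulAut.conjNormal g '' H.conjugatesBy X A ⊆ normalClosure (H.conjugatesBy X A) := by
  rintro _ ⟨s, ⟨x, -, a, ha, hs⟩, rfl⟩
  obtain ⟨y, hy, hgxy⟩ := hX (g * x)
  have hya : (⟨y * a * y⁻¹, hH.conj_mem a (hA ha) y⟩ : H) ∈
      normalClosure (H.conjugatesBy X A) :=
    subset_normalClosure ⟨y, hy, a, ha, rfl⟩
  rw [SetLike.mem_coe]
  convert normalClosure_normal.conj_mem _ hya ⟨g * x * y⁻¹, hgxy⟩ using 2
  ext
  simp only [MulAut.conjNormal_apply, hs, coe_mul, coe_inv]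
  group

theorem subset_map_normalClosure_conjugatesBy {H : Subgroup G} [hH : H.Normal] {X A : Set G}
    (hA : A ⊆ H) {x : G} (hx : x ∈ X)
    [hN : ((normalClosure (H.conjugatesBy X A)).map H.subtype).Normal] :
    A ⊆ (normalClosure (H.conjugatesBy X A)).map H.subtype := by
  intro a ha
  have hxa : x * a * x⁻¹ ∈ (normalClosure (H.conjugatesBy X A)).map H.subtype :=
    ⟨⟨_, hH.conj_mem a (hA ha) x⟩, subset_normalClosure ⟨x, hx, a, ha, rfl⟩, rfl⟩
  simpa [mul_assoc] using hN.conj_mem _ hxa x⁻¹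

theorem map_normalClosure_conjugatesBy_le (H : Subgroup G) (X A : Set G) :
    (normalClosure (H.conjugatesBy X A)).map H.subtype ≤ normalClosure A := by
  refine (map_normalClosure_le _ _).trans (normalClosure_le_normal ?_)
  rintro _ ⟨s, ⟨x, -, a, ha, hs⟩, rfl⟩
  rw [H.subtype_apply, hs]
  exact normalClosure_normal.conj_mem a (subset_normalClosure ha) x

end Subgroup

/-- Let `G` be a group, `H` a normal subgroup of `G`, and `X ⊆ G` a right transversal of `H`
in `G` (i.e., every `g ∈ G` satisfies `g * x⁻¹ ∈ H` for some `x ∈ X`). Then for every subset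
`A ⊆ H`, the normal closure of `A` in `G` equals the normal closure, computed in `H`, of the
set `{x a x⁻¹ : x ∈ X, a ∈ A}`, regarded as a subgroup of `G`. -/
theorem stmt2 {G : Type*} [Group G] (H : Subgroup G) [H.Normal] (X : Set G)
    (hX : ∀ g : G, ∃ x ∈ X, g * x⁻¹ ∈ H) (A : Set G) (hA : A ⊆ (H : Set G)) :
    Subgroup.normalClosure A =
      (Subgroup.normalClosure
        {h : H | ∃ x ∈ X, ∃ a ∈ A, (h : G) = x * a * x⁻¹}).map H.subtype := by
  change Subgroup.normalClosure A =
    (Subgroup.normalClosure (H.conjugatesBy X A)).map H.subtype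
  have := Subgroup.normal_map_subtype_normalClosure
    (Subgroup.conjNormal_image_conjugatesBy_subset hX hA)
  obtain ⟨x, hx, -⟩ := hX 1
  exact le_antisymm
    (Subgroup.normalClosure_le_normal (Subgroup.subset_map_normalClosure_conjugatesBy hA hx))
    (Subgroup.map_normalClosure_conjugatesBy_le H X A)
end

section
/- Let G be a group, H a normal subgroup of G, and X ⊆ G a right transversal of H in G (i.e., for every g ∈ G there exists x ∈ X with g·x⁻¹ ∈ H). Let A and B be subsets of H. Suppose that ⟪A⟫_H = ⟪A⟫_G, and suppose that for every b ∈ B and every x ∈ X, the image of x b x⁻¹ in the quotient group G/⟪A⟫_G equals the image of b or the image of b⁻¹. Then ⟪A ∪ B⟫_H = ⟪A ∪ B⟫_G. -/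
/-- Proposition `normclosures`: let `H` be a normal subgroup of `G` with right transversal
`X`, and let `A, B ⊆ H`. Suppose `⟪A⟫_H = ⟪A⟫_G` and that for all `b ∈ B`, `x ∈ X`, the image
of `x b x⁻¹` in `G/⟪A⟫_G` equals the image of `b` or of `b⁻¹`.
Then `⟪A ∪ B⟫_H = ⟪A ∪ B⟫_G`. -/
theorem stmt3 {G : Type*} [Group G] (H : Subgroup G) [H.Normal] (X : Set G)
    (hX : ∀ g : G, ∃ x ∈ X, g * x⁻¹ ∈ H) (A B : Set G)
    (hA : A ⊆ (H : Set G)) (hB : B ⊆ (H : Set G))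
    (hAcl : (Subgroup.normalClosure (Subtype.val ⁻¹' A : Set H)).map H.subtype =
      Subgroup.normalClosure A)
    (hconj : ∀ b ∈ B, ∀ x ∈ X,
      (QuotientGroup.mk (x * b * x⁻¹) : G ⧸ Subgroup.normalClosure A) = QuotientGroup.mk b ∨
      (QuotientGroup.mk (x * b * x⁻¹) : G ⧸ Subgroup.normalClosure A) =
        QuotientGroup.mk b⁻¹) :
    (Subgroup.normalClosure (Subtype.val ⁻¹' (A ∪ B) : Set H)).map H.subtype =
      Subgroup.normalClosure (A ∪ B) := by
  set N := Subgroup.normalClosure (Subtype.val ⁻¹' (A ∪ B) : Set H) with hN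
  set K := N.map H.subtype with hK
  -- K is stable under conjugation by elements of H
  have hHconj : ∀ h ∈ H, ∀ k ∈ K, h * k * h⁻¹ ∈ K := by
    rintro h hh k ⟨m, hm, rfl⟩
    refine ⟨⟨h, hh⟩ * m * ⟨h, hh⟩⁻¹,
      Subgroup.normalClosure_normal.conj_mem m hm ⟨h, hh⟩, rfl⟩
  -- A ∪ B ⊆ K
  have hsubK : A ∪ B ⊆ (K : Set G) := fun s hs =>
    ⟨⟨s, hs.elim (fun h => hA h) (fun h => hB h)⟩, Subgroup.subset_normalClosure hs, rfl⟩
  -- normalClosure A ≤ K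
  have hAK : Subgroup.normalClosure A ≤ K := by
    rw [← hAcl]
    exact Subgroup.map_mono
      (Subgroup.normalClosure_mono (Set.preimage_mono Set.subset_union_left))
  -- K is stable under conjugation by elements of X
  have hXconj : ∀ x ∈ X, ∀ k ∈ K, x * k * x⁻¹ ∈ K := by
    intro x hx
    have key : N ≤ K.comap ((MulAut.conj x).toMonoidHom.comp H.subtype) := by
      haveI : (K.comap ((MulAut.conj x).toMonoidHom.comp H.subtype)).Normal := by
        constructor
        intro m hm h
        simp only [Subgroup.mem_comap, MonoidHom.comp_apply, MulAut.conj_apply,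
          MulEquiv.coe_toMonoidHom, Subgroup.coe_subtype] at hm ⊢
        have hh : x * (h : G) * x⁻¹ ∈ H := ‹H.Normal›.conj_mem h h.2 x
        have : x * ((h * m * h⁻¹ : H) : G) * x⁻¹ =
            (x * h * x⁻¹) * (x * (m : G) * x⁻¹) * (x * h * x⁻¹)⁻¹ := by
          push_cast; group
        rw [this]
        exact hHconj _ hh _ hm
      apply Subgroup.normalClosure_le_normal
      intro m hm
      simp only [Set.mem_preimage] at hm
      simp only [SetLike.mem_coe, Subgroup.mem_comap, MonoidHom.comp_apply, MulAut.conj_apply,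
        MulEquiv.coe_toMonoidHom, Subgroup.coe_subtype]
      rcases hm with hmA | hmB
      · exact hAK (Subgroup.normalClosure_normal.conj_mem _
          (Subgroup.subset_normalClosure hmA) x)
      · rcases hconj _ hmB x hx with h1 | h1
        · have hn : ((x * (m : G) * x⁻¹)⁻¹ * (m : G)) ∈ Subgroup.normalClosure A :=
            (QuotientGroup.eq (s := Subgroup.normalClosure A)).mp h1
          have : x * (m : G) * x⁻¹ =
              (m : G) * ((x * (m : G) * x⁻¹)⁻¹ * (m : G))⁻¹ := by group
          rw [this]
          exact K.mul_mem (hsubK (Or.inr hmB)) (K.inv_mem (hAK hn))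
        · have hn : ((x * (m : G) * x⁻¹)⁻¹ * (m : G)⁻¹) ∈ Subgroup.normalClosure A :=
            (QuotientGroup.eq (s := Subgroup.normalClosure A)).mp h1
          have : x * (m : G) * x⁻¹ =
              (m : G)⁻¹ * ((x * (m : G) * x⁻¹)⁻¹ * (m : G)⁻¹)⁻¹ := by group
          rw [this]
          exact K.mul_mem (K.inv_mem (hsubK (Or.inr hmB))) (K.inv_mem (hAK hn))
    rintro k ⟨m, hm, rfl⟩
    have := key hm
    simpa [Subgroup.mem_comap] using this
  -- K is normal in G
  haveI hKn : K.Normal := by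
    constructor
    intro n hn g
    obtain ⟨x, hxX, hgx⟩ := hX g
    have : g * n * g⁻¹ = (g * x⁻¹) * (x * n * x⁻¹) * (g * x⁻¹)⁻¹ := by group
    rw [this]
    exact hHconj _ hgx _ (hXconj x hxX n hn)
  apply le_antisymm
  · rw [Subgroup.map_le_iff_le_comap]
    haveI : ((Subgroup.normalClosure (A ∪ B)).comap H.subtype).Normal :=
      Subgroup.normalClosure_normal.comap H.subtype
    exact Subgroup.normalClosure_le_normal
      (fun m hm => Subgroup.subset_normalClosure (s := A ∪ B) hm)
  · exact Subgroup.normalClosure_le_normal hsubK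
end

section
/- Let H be the free group on two generators a, b, and let G = H ⋊ ℤ/2 be the semidirect product in which the nontrivial element of ℤ/2 acts on H by the automorphism exchanging the generators a and b. Then the normal closure in G of the element (a, 0) (the image of the generator a under the canonical inclusion of H into G) equals the canonical copy of H in G, i.e., the image of the inclusion H → G. -/
/-! The copy of `H` is normal in `H ⋊ ℤ/2`, being the kernel of the projection to `ℤ/2`.
Conversely, conjugating `a` by the generator of `ℤ/2` gives `b`, so the normal closure of `a`
contains both free generators of `H`. -/

namespace SemidirectProduct

variable {N G : Type*} [Group N] [Group G] {φ : G →* MulAut N}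

theorem inl_mem_normalClosure_of_mem_image {s : Set N} {n : N} (g : G) (hn : n ∈ s) :
    inl (φ g n) ∈ Subgroup.normalClosure (inl '' s : Set (N ⋊[φ] G)) := by
  rw [inl_aut, map_inv]
  exact Subgroup.normalClosure_normal.conj_mem _
    (Subgroup.subset_normalClosure (Set.mem_image_of_mem _ hn)) _

theorem normalClosure_image_inl_le_range (s : Set N) :
    Subgroup.normalClosure (inl '' s : Set (N ⋊[φ] G)) ≤ (inl : N →* N ⋊[φ] G).range := by
  have : (inl : N →* N ⋊[φ] G).range.Normal := by
    rw [range_inl_eq_ker_rightHom]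
    infer_instance
  exact Subgroup.normalClosure_le_normal (Set.image_subset_range _ _)

theorem normalClosure_image_inl_eq_range {s : Set N}
    (hs : Subgroup.closure (⋃ g, (φ g : N → N) '' s) = ⊤) :
    Subgroup.normalClosure (inl '' s : Set (N ⋊[φ] G)) = (inl : N →* N ⋊[φ] G).range := by
  refine le_antisymm (normalClosure_image_inl_le_range s) ?_
  rw [MonoidHom.range_eq_map, ← hs, MonoidHom.map_closure, Subgroup.closure_le]
  rintro _ ⟨_, ⟨_, ⟨g, rfl⟩, n, hn, rfl⟩, rfl⟩
  exact inl_mem_normalClosure_of_mem_image g hn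

end SemidirectProduct

/-- Let `H` be the free group on two generators `a = of false`, `b = of true`, and let
`G = H ⋊ ℤ/2` where the nontrivial element of `ℤ/2` acts by exchanging the two generators.
Then the normal closure in `G` of the image of `a` under the canonical inclusion `H → G`
equals the canonical copy of `H` in `G`. -/
theorem stmt4 (φ : Multiplicative (ZMod 2) →* MulAut (FreeGroup Bool))
    (hφ : φ (Multiplicative.ofAdd 1) =
      (FreeGroup.freeGroupCongr (Equiv.swap false true) : MulAut (FreeGroup Bool))) :
    Subgroup.normalClosure
        {(SemidirectProduct.inl (FreeGroup.of false) :
          FreeGroup Bool ⋊[φ] Multiplicative (ZMod 2))} =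
      (SemidirectProduct.inl :
        FreeGroup Bool →* FreeGroup Bool ⋊[φ] Multiplicative (ZMod 2)).range := by
  rw [← Set.image_singleton]
  refine SemidirectProduct.normalClosure_image_inl_eq_range (eq_top_iff.2 ?_)
  rw [← FreeGroup.closure_range_of, Subgroup.closure_le]
  rintro _ ⟨x, rfl⟩
  apply Subgroup.subset_closure
  refine Set.mem_iUnion.2 ⟨if x then Multiplicative.ofAdd 1 else 1, FreeGroup.of false, rfl, ?_⟩
  cases x <;> simp [hφ]
end

section
/- Let V be a real inner product space, let K be a subgroup of the group of affine isometry equivalences of V (under composition), and suppose the translation t : x ↦ x + v by a vector v ∈ V belongs to K. Then the cyclic subgroup ⟨t⟩ generated by t is a normal subgroup of K if and only if for every g ∈ K, the linear part A of g satisfies A(v) = v or A(v) = -v. -/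
open AffineIsometryEquiv

/-- `constVAdd` as a monoid hom from `Multiplicative V`. -/
private noncomputable def chom (V : Type*) [NormedAddCommGroup V] [InnerProductSpace ℝ V] :
    Multiplicative V →* (V ≃ᵃⁱ[ℝ] V) where
  toFun w := AffineIsometryEquiv.constVAdd ℝ V w.toAdd
  map_one' := by ext x; simp
  map_mul' a b := by ext x; simp [add_assoc]

private lemma constVAdd_zpow {V : Type*} [NormedAddCommGroup V] [InnerProductSpace ℝ V]
    (v : V) (n : ℤ) :
    (AffineIsometryEquiv.constVAdd ℝ V v) ^ n = AffineIsometryEquiv.constVAdd ℝ V (n • v) := by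
  have := map_zpow (chom V) (Multiplicative.ofAdd v) n
  simpa [chom, ← ofAdd_zsmul] using this.symm

private lemma constVAdd_inj {V : Type*} [NormedAddCommGroup V] [InnerProductSpace ℝ V]
    {w w' : V} (h : AffineIsometryEquiv.constVAdd ℝ V w = AffineIsometryEquiv.constVAdd ℝ V w') :
    w = w' := by
  have := congrArg (fun e : V ≃ᵃⁱ[ℝ] V => e 0) h
  simpa using this

private lemma conj_constVAdd {V : Type*} [NormedAddCommGroup V] [InnerProductSpace ℝ V]
    (g : V ≃ᵃⁱ[ℝ] V) (v : V) :
    g * AffineIsometryEquiv.constVAdd ℝ V v * g⁻¹ =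
      AffineIsometryEquiv.constVAdd ℝ V (g.linearIsometryEquiv v) := by
  ext x
  simp only [coe_mul, coe_inv, Function.comp_apply, coe_constVAdd]
  rw [AffineIsometryEquiv.map_vadd, apply_symm_apply]

/-- Theorem `bundlesref` (normality criterion): let `V` be a real inner product space, `K` a
subgroup of the group of affine isometry equivalences of `V`, and suppose the translation
`t : x ↦ v + x` belongs to `K`. Then `⟨t⟩` is a normal subgroup of `K` if and only if every
`g ∈ K` has linear part `A` with `A v = v` or `A v = -v`. -/
theorem stmt7 {V : Type*} [NormedAddCommGroup V] [InnerProductSpace ℝ V]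
    (K : Subgroup (V ≃ᵃⁱ[ℝ] V)) (v : V)
    (ht : AffineIsometryEquiv.constVAdd ℝ V v ∈ K) :
    ((Subgroup.zpowers (AffineIsometryEquiv.constVAdd ℝ V v)).subgroupOf K).Normal ↔
      ∀ g ∈ K, (AffineIsometryEquiv.linearIsometryEquiv g) v = v ∨
        (AffineIsometryEquiv.linearIsometryEquiv g) v = -v := by
  set t := AffineIsometryEquiv.constVAdd ℝ V v with htdef
  constructor
  · intro hN g hg
    have htm : (⟨t, ht⟩ : K) ∈ (Subgroup.zpowers t).subgroupOf K := by
      simp [Subgroup.mem_subgroupOf, Subgroup.mem_zpowers]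
    have hc := hN.conj_mem _ htm ⟨g, hg⟩
    rw [Subgroup.mem_subgroupOf] at hc
    obtain ⟨n, hn⟩ := hc
    dsimp only at hn
    have hn2 : t ^ n = g * t * g⁻¹ := by rw [hn]; rfl
    have hn' : AffineIsometryEquiv.constVAdd ℝ V (n • v) =
        AffineIsometryEquiv.constVAdd ℝ V (g.linearIsometryEquiv v) := by
      rw [← constVAdd_zpow, ← htdef, hn2, htdef, conj_constVAdd]
    have hAv : g.linearIsometryEquiv v = n • v := (constVAdd_inj hn').symm
    rcases eq_or_ne v 0 with rfl | hv
    · left; simp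
    · have hnorm : ‖(n : ℤ) • v‖ = ‖v‖ := by
        rw [← hAv]; exact g.linearIsometryEquiv.norm_map v
      rw [← Int.cast_smul_eq_zsmul ℝ, norm_smul] at hnorm
      have hv' : ‖v‖ ≠ 0 := norm_ne_zero_iff.mpr hv
      have hX : ‖(n : ℝ)‖ = 1 := by
        have := mul_right_cancel₀ hv' (hnorm.trans (one_mul ‖v‖).symm)
        exact this
      have habs : |n| = 1 := by
        have : |(n : ℝ)| = 1 := by rwa [Real.norm_eq_abs] at hX
        exact_mod_cast this
      have hn1 : n = 1 ∨ n = -1 := abs_eq (by norm_num : (0:ℤ) ≤ 1) |>.mp habs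
      rcases hn1 with rfl | rfl
      · left; simpa using hAv
      · right; simpa using hAv
  · intro h
    constructor
    intro n hn g
    rw [Subgroup.mem_subgroupOf] at hn ⊢
    obtain ⟨k, hk⟩ := hn
    dsimp only at hk
    have hconj : ((g * n * g⁻¹ : K) : V ≃ᵃⁱ[ℝ] V) =
        AffineIsometryEquiv.constVAdd ℝ V (k • (g : V ≃ᵃⁱ[ℝ] V).linearIsometryEquiv v) := by
      have : ((g * n * g⁻¹ : K) : V ≃ᵃⁱ[ℝ] V) =
          ((g : V ≃ᵃⁱ[ℝ] V) * t * (g : V ≃ᵃⁱ[ℝ] V)⁻¹) ^ k := by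
        rw [conj_zpow, hk]; rfl
      rw [this, htdef, conj_constVAdd, constVAdd_zpow]
    rcases h g g.2 with hA | hA
    · rw [hA] at hconj
      refine ⟨k, ?_⟩
      show t ^ k = _
      rw [htdef, constVAdd_zpow, hconj]
    · rw [hA] at hconj
      refine ⟨-k, ?_⟩
      show t ^ (-k) = _
      rw [htdef, constVAdd_zpow, hconj]
      congr 1
      simp
end

section
/- Let P be the group with presentation ⟨a, e, f | e² = 1, f² = 1, a e a⁻¹ = f, a f a⁻¹ = e⟩. Then P is isomorphic to the semidirect product (ℤ/2 * ℤ/2) ⋊ ℤ, where ℤ/2 * ℤ/2 is the free product of two cyclic groups of order 2 and the generator of ℤ acts by the automorphism exchanging the generators of the two free factors. -/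
/-- Relators of the presentation `⟨a, e, f | e² = 1, f² = 1, a e a⁻¹ = f, a f a⁻¹ = e⟩`,
where the generators are `a = of 0`, `e = of 1`, `f = of 2`. -/
def stmt8Rels : Set (FreeGroup (Fin 3)) :=
  {FreeGroup.of 1 * FreeGroup.of 1,
   FreeGroup.of 2 * FreeGroup.of 2,
   FreeGroup.of 0 * FreeGroup.of 1 * (FreeGroup.of 0)⁻¹ * (FreeGroup.of 2)⁻¹,
   FreeGroup.of 0 * FreeGroup.of 2 * (FreeGroup.of 0)⁻¹ * (FreeGroup.of 1)⁻¹}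

/-!
Let `t` generate `ℤ` and `ε₁, ε₂` the two factors of `ℤ/2 * ℤ/2`. Conjugation by `t` in the
semidirect product is `σ`, so `t, ε₁, ε₂` satisfy the relations of `a, e, f`. Conversely `e, f`
are involutions swapped by conjugation with `a`, so `ε₁ ↦ e, ε₂ ↦ f` defines a map on the free
product intertwining `σ` with conjugation by `a`, hence `σ ^ k` with conjugation by `a ^ k`;
together with `t ↦ a` it therefore extends to the semidirect product. The two maps are inverse
to each other on generators.
-/

open Monoid Multiplicative

section ZModPowers

variable {G : Type*} [Group G] {n : ℕ}

@[ext]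
theorem MonoidHom.ext_mzmod {f g : Multiplicative (ZMod n) →* G}
    (h : f (ofAdd 1) = g (ofAdd 1)) : f = g := by
  refine MonoidHom.ext fun x => ?_
  obtain ⟨k, hk⟩ := ZMod.intCast_surjective x.toAdd
  have hx : x = ofAdd (1 : ZMod n) ^ k := by rw [← ofAdd_zsmul, zsmul_one, hk, ofAdd_toAdd]
  rw [hx, map_zpow, map_zpow, h]

noncomputable def zmodPowersHom (x : G) (hx : x ^ n = 1) : Multiplicative (ZMod n) →* G :=
  AddMonoidHom.toMultiplicativeLeft <| ZMod.lift n
    ⟨zmultiplesHom (Additive G) (.ofMul x), by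
      simpa [← ofMul_pow] using congrArg Additive.ofMul hx⟩

@[simp]
theorem zmodPowersHom_ofAdd_one (x : G) (hx : x ^ n = 1) : zmodPowersHom x hx (ofAdd 1) = x := by
  rw [← Int.cast_one (R := ZMod n)]
  simp only [zmodPowersHom, AddMonoidHom.coe_toMultiplicativeLeft, Function.comp_apply,
    toAdd_ofAdd, ZMod.lift_coe]
  simp

end ZModPowers

section SemidirectProductInt

variable {N G : Type*} [Group N] [Group G] {σ : MulAut N}

theorem MonoidHom.apply_zpow_apply_eq_conj_zpow (φ : N →* G) {g : G}
    (h : ∀ n, φ (σ n) = MulAut.conj g (φ n)) (k : ℤ) (n : N) :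
    φ ((σ ^ k) n) = MulAut.conj (g ^ k) (φ n) := by
  induction k using Int.induction_on generalizing n with
  | zero => simp
  | succ k ih =>
    rw [zpow_add_one, MulAut.mul_apply, ih, h, zpow_add_one, map_mul, MulAut.mul_apply]
  | pred k ih =>
    have h_inv : φ (σ⁻¹ n) = (MulAut.conj g)⁻¹ (φ n) := by
      conv_rhs => rw [← MulAut.apply_inv_self _ σ n, h, MulAut.inv_apply_self]
    rw [zpow_sub_one, MulAut.mul_apply, ih, h_inv, zpow_sub_one, map_mul, map_inv, MulAut.mul_apply]

namespace SemidirectProduct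

def liftZPowers (φ : N →* G) (g : G) (h : ∀ n, φ (σ n) = MulAut.conj g (φ n)) :
    N ⋊[zpowersHom _ σ] Multiplicative ℤ →* G :=
  lift φ (zpowersHom G g) fun k => MonoidHom.ext fun n => by
    simpa using φ.apply_zpow_apply_eq_conj_zpow h k.toAdd n

variable (φ : N →* G) (g : G) (h : ∀ n, φ (σ n) = MulAut.conj g (φ n))

@[simp]
theorem liftZPowers_inl (n : N) : liftZPowers φ g h (inl n) = φ n := lift_inl ..

@[simp]
theorem liftZPowers_inr_ofAdd_one : liftZPowers φ g h (inr (ofAdd 1)) = g := by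
  simp [liftZPowers]

end SemidirectProduct

end SemidirectProductInt

local notation "C₂" => Multiplicative (ZMod 2)
local notation "D∞" => Coprod C₂ C₂
local notation "P" => PresentedGroup stmt8Rels

open PresentedGroup

theorem stmt8Rels_relations :
    (of 1 : P) ^ 2 = 1 ∧ (of 2 : P) ^ 2 = 1 ∧
      of 0 * of 1 * (of 0)⁻¹ = (of 2 : P) ∧ of 0 * of 2 * (of 0)⁻¹ = (of 1 : P) := by
  refine ⟨?_, ?_, ?_, ?_⟩ <;>
    [rw [sq]; rw [sq]; rw [← mul_inv_eq_one]; rw [← mul_inv_eq_one]] <;>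
    exact one_of_mem (by simp [stmt8Rels])

noncomputable def dInfToPresented : D∞ →* P :=
  Coprod.lift (zmodPowersHom (of 1) stmt8Rels_relations.1)
    (zmodPowersHom (of 2) stmt8Rels_relations.2.1)

@[simp]
theorem dInfToPresented_inl : dInfToPresented (.inl (ofAdd 1)) = of 1 := by
  simp [dInfToPresented]

@[simp]
theorem dInfToPresented_inr : dInfToPresented (.inr (ofAdd 1)) = of 2 := by
  simp [dInfToPresented]

section

variable {σ : MulAut D∞} (hσl : ∀ x : C₂, σ (Coprod.inl x) = Coprod.inr x)
    (hσr : ∀ x : C₂, σ (Coprod.inr x) = Coprod.inl x)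
include hσl hσr

theorem dInfToPresented_apply_swap (n : D∞) :
    dInfToPresented (σ n) = MulAut.conj (of 0) (dInfToPresented n) := by
  suffices dInfToPresented.comp σ.toMonoidHom =
      (MulAut.conj (of 0 : P)).toMonoidHom.comp dInfToPresented from DFunLike.congr_fun this n
  ext <;> simp [hσl, hσr, stmt8Rels_relations]

def presentedToSemidirect : P →* D∞ ⋊[zpowersHom _ σ] Multiplicative ℤ :=
  toGroup (f := ![.inr (ofAdd 1), .inl (.inl (ofAdd 1)), .inl (.inr (ofAdd 1))]) <| by
    have hsq : (ofAdd 1 : C₂) * ofAdd 1 = 1 := rfl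
    rintro r (rfl | rfl | rfl | rfl) <;>
      simp only [map_mul, map_inv, FreeGroup.lift_apply_of, Matrix.cons_val] <;>
      simp only [← map_mul, ← map_inv, ← SemidirectProduct.inl_aut, zpowersHom_apply, toAdd_ofAdd,
        zpow_one, hσl, hσr, hsq, mul_inv_cancel, map_one]

noncomputable def semidirectToPresented : D∞ ⋊[zpowersHom _ σ] Multiplicative ℤ →* P :=
  SemidirectProduct.liftZPowers dInfToPresented (of 0) (dInfToPresented_apply_swap hσl hσr)

theorem semidirectToPresented_comp_presentedToSemidirect :
    (semidirectToPresented hσl hσr).comp (presentedToSemidirect hσl hσr) =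
      MonoidHom.id P := by
  refine PresentedGroup.ext fun i => ?_
  fin_cases i <;> simp [presentedToSemidirect, semidirectToPresented]

theorem presentedToSemidirect_comp_semidirectToPresented :
    (presentedToSemidirect hσl hσr).comp (semidirectToPresented hσl hσr) = MonoidHom.id _ := by
  refine SemidirectProduct.hom_ext (Coprod.hom_ext ?_ ?_) (MonoidHom.ext_mint ?_) <;>
    try refine MonoidHom.ext_mzmod ?_
  all_goals simp [presentedToSemidirect, semidirectToPresented]

end

/-- The group `⟨a, e, f | e² = 1, f² = 1, a e a⁻¹ = f, a f a⁻¹ = e⟩` is isomorphic to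
`(ℤ/2 * ℤ/2) ⋊ ℤ`, where the generator of `ℤ` acts on the free product `ℤ/2 * ℤ/2` by the
automorphism `σ` exchanging the generators of the two free factors. -/
theorem stmt8 (σ : MulAut (Monoid.Coprod (Multiplicative (ZMod 2)) (Multiplicative (ZMod 2))))
    (hσl : ∀ x : Multiplicative (ZMod 2), σ (Monoid.Coprod.inl x) = Monoid.Coprod.inr x)
    (hσr : ∀ x : Multiplicative (ZMod 2), σ (Monoid.Coprod.inr x) = Monoid.Coprod.inl x) :
    Nonempty (PresentedGroup stmt8Rels ≃*
      (Monoid.Coprod (Multiplicative (ZMod 2)) (Multiplicative (ZMod 2)))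
        ⋊[zpowersHom _ σ] Multiplicative ℤ) :=
  ⟨MonoidHom.toMulEquiv _ _ (semidirectToPresented_comp_presentedToSemidirect hσl hσr)
    (presentedToSemidirect_comp_semidirectToPresented hσl hσr)⟩
end

section
/- Let P be the group with presentation on four generators a₀, f₀, a₁, f₁ and the five relators f₀f₁, a₀a₁⁻¹f₀⁻¹, a₀f₁a₁⁻¹, a₁a₀⁻¹f₁⁻¹, a₁f₀a₀⁻¹. Then P is isomorphic to ℤ × ℤ, with the images of a₀ and a₁ forming a basis of this free abelian group. -/
/-- Relators of the presentation on four generators `a₀ = of 0`, `f₀ = of 1`, `a₁ = of 2`,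
`f₁ = of 3` with the five relators
`f₀f₁`, `a₀a₁⁻¹f₀⁻¹`, `a₀f₁a₁⁻¹`, `a₁a₀⁻¹f₁⁻¹`, `a₁f₀a₀⁻¹`. -/
def stmt10Rels : Set (FreeGroup (Fin 4)) :=
  {FreeGroup.of 1 * FreeGroup.of 3,
   FreeGroup.of 0 * (FreeGroup.of 2)⁻¹ * (FreeGroup.of 1)⁻¹,
   FreeGroup.of 0 * FreeGroup.of 3 * (FreeGroup.of 2)⁻¹,
   FreeGroup.of 2 * (FreeGroup.of 0)⁻¹ * (FreeGroup.of 3)⁻¹,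
   FreeGroup.of 2 * FreeGroup.of 1 * (FreeGroup.of 0)⁻¹}

private def stmt10f : Fin 4 → Multiplicative (ℤ × ℤ) := fun i =>
  Multiplicative.ofAdd (![(1,0), (1,-1), (0,1), (-1,1)] i)

private lemma stmt10h : ∀ r ∈ stmt10Rels, FreeGroup.lift stmt10f r = 1 := by
  intro r hr
  rcases hr with rfl | rfl | rfl | rfl | rfl <;>
    simp [stmt10f, ← ofAdd_add, ← ofAdd_neg, Prod.ext_iff]

private lemma stmt10rel_one : ∀ r ∈ stmt10Rels, PresentedGroup.mk stmt10Rels r = 1 := by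
  intro r hr
  exact (QuotientGroup.eq_one_iff r).mpr (Subgroup.subset_normalClosure hr)

private lemma stmt10rel3 :
    (PresentedGroup.of 3 : PresentedGroup stmt10Rels) =
      (PresentedGroup.of 0)⁻¹ * PresentedGroup.of 2 := by
  have h := stmt10rel_one _ (by simp [stmt10Rels] :
    FreeGroup.of 0 * FreeGroup.of 3 * (FreeGroup.of 2)⁻¹ ∈ stmt10Rels)
  simp only [map_mul, map_inv] at h
  rw [mul_inv_eq_one] at h
  rw [show (PresentedGroup.mk stmt10Rels (FreeGroup.of 0) : PresentedGroup stmt10Rels)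
    = PresentedGroup.of 0 from rfl] at h
  exact eq_inv_mul_of_mul_eq h

private lemma stmt10rel4 :
    (PresentedGroup.of 3 : PresentedGroup stmt10Rels) =
      PresentedGroup.of 2 * (PresentedGroup.of 0)⁻¹ := by
  have h := stmt10rel_one _ (by simp [stmt10Rels] :
    FreeGroup.of 2 * (FreeGroup.of 0)⁻¹ * (FreeGroup.of 3)⁻¹ ∈ stmt10Rels)
  simp only [map_mul, map_inv] at h
  rw [mul_inv_eq_one] at h
  exact h.symm

private lemma stmt10rel2 :
    (PresentedGroup.of 1 : PresentedGroup stmt10Rels) =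
      PresentedGroup.of 0 * (PresentedGroup.of 2)⁻¹ := by
  have h := stmt10rel_one _ (by simp [stmt10Rels] :
    FreeGroup.of 0 * (FreeGroup.of 2)⁻¹ * (FreeGroup.of 1)⁻¹ ∈ stmt10Rels)
  simp only [map_mul, map_inv] at h
  rw [mul_inv_eq_one] at h
  exact h.symm

private lemma stmt10comm :
    Commute (PresentedGroup.of 0 : PresentedGroup stmt10Rels) (PresentedGroup.of 2) := by
  have h := stmt10rel3.symm.trans stmt10rel4
  exact Commute.inv_left_iff.mp h

private noncomputable def stmt10ψ :
    Multiplicative (ℤ × ℤ) →* PresentedGroup stmt10Rels where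
  toFun x := (PresentedGroup.of 0 : PresentedGroup stmt10Rels) ^ x.toAdd.1 *
    (PresentedGroup.of 2 : PresentedGroup stmt10Rels) ^ x.toAdd.2
  map_one' := by simp
  map_mul' x y := by
    simp only [toAdd_mul, Prod.fst_add, Prod.snd_add, zpow_add]
    exact ((stmt10comm.zpow_zpow _ _).mul_mul_mul_comm _ _)

/-- The group presented by the above relators is isomorphic to `ℤ × ℤ`, with the images of
`a₀` and `a₁` forming a basis of this free abelian group. -/
theorem stmt10 :
    ∃ e : PresentedGroup stmt10Rels ≃* Multiplicative (ℤ × ℤ),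
      e (PresentedGroup.of 0) = Multiplicative.ofAdd (1, 0) ∧
      e (PresentedGroup.of 2) = Multiplicative.ofAdd (0, 1) := by
  let φ : PresentedGroup stmt10Rels →* Multiplicative (ℤ × ℤ) :=
    PresentedGroup.toGroup stmt10h
  have hφ : ∀ i, φ (PresentedGroup.of i) = stmt10f i := fun i => PresentedGroup.toGroup.of _
  have left : ∀ x, stmt10ψ (φ x) = x := by
    have : stmt10ψ.comp φ = MonoidHom.id _ := by
      ext i
      simp only [MonoidHom.comp_apply, MonoidHom.id_apply, hφ]
      fin_cases i <;>
        simp only [stmt10f, stmt10ψ, MonoidHom.coe_mk, OneHom.coe_mk, toAdd_ofAdd] <;>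
        simp [stmt10rel2, stmt10rel3]
    exact fun x => DFunLike.congr_fun this x
  have right : ∀ x, φ (stmt10ψ x) = x := by
    intro x
    simp only [stmt10ψ, MonoidHom.coe_mk, OneHom.coe_mk, map_mul, map_zpow, hφ]
    apply Multiplicative.toAdd.injective
    simp only [stmt10f]
    simp [Prod.ext_iff]
  let e : PresentedGroup stmt10Rels ≃* Multiplicative (ℤ × ℤ) :=
    { toFun := φ, invFun := stmt10ψ, left_inv := left, right_inv := right,
      map_mul' := φ.map_mul }
  refine ⟨e, ?_, ?_⟩ <;> simp [e, hφ, stmt10f]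
end

section
/- Let P be the group with presentation on six generators c₀, g₀, e₀, c₁, g₁, e₁ and the eleven relators e₀g₁e₁g₀, g₀⁻¹c₀⁻¹g₀c₀, e₁⁻¹c₁e₀⁻¹c₀, g₁e₁²g₀, c₀⁻¹e₀²c₁⁻¹, e₁g₀e₀g₁, g₁⁻¹c₁⁻¹g₁c₁, e₀⁻¹c₀e₁⁻¹c₁, g₀e₀²g₁, c₁⁻¹e₁²c₀⁻¹, and c₁. Then P is isomorphic to ℤ × ℤ, with the images of e₀ and g₀ forming a basis of this free abelian group; in particular, in P one has c₀ = e₀², e₁ = e₀, and g₁ = e₀⁻²g₀⁻¹. -/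
/-- Relators of the presentation on six generators `c₀ = of 0`, `g₀ = of 1`, `e₀ = of 2`,
`c₁ = of 3`, `g₁ = of 4`, `e₁ = of 5` with the eleven relators
`e₀g₁e₁g₀`, `g₀⁻¹c₀⁻¹g₀c₀`, `e₁⁻¹c₁e₀⁻¹c₀`, `g₁e₁²g₀`, `c₀⁻¹e₀²c₁⁻¹`,
`e₁g₀e₀g₁`, `g₁⁻¹c₁⁻¹g₁c₁`, `e₀⁻¹c₀e₁⁻¹c₁`, `g₀e₀²g₁`, `c₁⁻¹e₁²c₀⁻¹`, `c₁`. -/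
def stmt11Rels : Set (FreeGroup (Fin 6)) :=
  {FreeGroup.of 2 * FreeGroup.of 4 * FreeGroup.of 5 * FreeGroup.of 1,
   (FreeGroup.of 1)⁻¹ * (FreeGroup.of 0)⁻¹ * FreeGroup.of 1 * FreeGroup.of 0,
   (FreeGroup.of 5)⁻¹ * FreeGroup.of 3 * (FreeGroup.of 2)⁻¹ * FreeGroup.of 0,
   FreeGroup.of 4 * (FreeGroup.of 5 * FreeGroup.of 5) * FreeGroup.of 1,
   (FreeGroup.of 0)⁻¹ * (FreeGroup.of 2 * FreeGroup.of 2) * (FreeGroup.of 3)⁻¹,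
   FreeGroup.of 5 * FreeGroup.of 1 * FreeGroup.of 2 * FreeGroup.of 4,
   (FreeGroup.of 4)⁻¹ * (FreeGroup.of 3)⁻¹ * FreeGroup.of 4 * FreeGroup.of 3,
   (FreeGroup.of 2)⁻¹ * FreeGroup.of 0 * (FreeGroup.of 5)⁻¹ * FreeGroup.of 3,
   FreeGroup.of 1 * (FreeGroup.of 2 * FreeGroup.of 2) * FreeGroup.of 4,
   (FreeGroup.of 3)⁻¹ * (FreeGroup.of 5 * FreeGroup.of 5) * (FreeGroup.of 0)⁻¹,
   FreeGroup.of 3}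

/-!
The relators `c₁`, `c₀⁻¹e₀²c₁⁻¹`, `e₀⁻¹c₀e₁⁻¹c₁` and `g₀e₀²g₁` express `c₁`, `c₀`, `e₁` and `g₁`
through `e₀` and `g₀`. The relator `g₁e₁²g₀` gives the second expression `g₁ = g₀⁻¹e₀⁻²`, and
substituting it into `e₀g₁e₁g₀` leaves the commutator of `e₀` and `g₀⁻¹`. Hence `P` is generated
by two commuting elements, i.e. it is a quotient of `ℤ²`; conversely
`c₀, g₀, e₀, c₁, g₁, e₁ ↦ (2,0), (0,1), (1,0), 0, (-2,-1), (1,0)` kills every relator.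
-/

lemma PresentedGroup.mk_of {α : Type*} (rels : Set (FreeGroup α)) (x : α) :
    PresentedGroup.mk rels (FreeGroup.of x) = PresentedGroup.of x :=
  rfl

def Commute.zpowPairHom {G : Type*} [Group G] {a b : G} (h : Commute a b) :
    Multiplicative (ℤ × ℤ) →* G :=
  (MonoidHom.noncommCoprod (zpowersHom G a) (zpowersHom G b) fun _ _ => h.zpow_zpow _ _).comp
    (MulEquiv.prodMultiplicative ℤ ℤ).toMonoidHom

@[simp]
lemma Commute.zpowPairHom_ofAdd {G : Type*} [Group G] {a b : G} (h : Commute a b) (m n : ℤ) :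
    h.zpowPairHom (Multiplicative.ofAdd (m, n)) = a ^ m * b ^ n :=
  rfl

namespace Stmt11

open PresentedGroup

local notation "P" => PresentedGroup stmt11Rels
local notation "c₀" => (of 0 : P)
local notation "g₀" => (of 1 : P)
local notation "e₀" => (of 2 : P)
local notation "c₁" => (of 3 : P)
local notation "g₁" => (of 4 : P)
local notation "e₁" => (of 5 : P)

lemma c₁_eq_one : c₁ = 1 :=
  one_of_mem (by simp [stmt11Rels])

lemma c₀_eq : c₀ = e₀ * e₀ := by
  have h := one_of_mem (rels := stmt11Rels)
    (x := (FreeGroup.of 0)⁻¹ * (FreeGroup.of 2 * FreeGroup.of 2) * (FreeGroup.of 3)⁻¹)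
    (by simp [stmt11Rels])
  simp only [map_mul, map_inv, mk_of, c₁_eq_one, inv_one, mul_one] at h
  exact inv_mul_eq_one.mp h

lemma e₁_eq : e₁ = e₀ := by
  have h := one_of_mem (rels := stmt11Rels)
    (x := (FreeGroup.of 2)⁻¹ * FreeGroup.of 0 * (FreeGroup.of 5)⁻¹ * FreeGroup.of 3)
    (by simp [stmt11Rels])
  simp only [map_mul, map_inv, mk_of, c₁_eq_one, c₀_eq, mul_one, inv_mul_cancel_left] at h
  exact (mul_inv_eq_one.mp h).symm

lemma g₁_eq : g₁ = e₀⁻¹ * e₀⁻¹ * g₀⁻¹ := by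
  have h := one_of_mem (rels := stmt11Rels)
    (x := FreeGroup.of 1 * (FreeGroup.of 2 * FreeGroup.of 2) * FreeGroup.of 4)
    (by simp [stmt11Rels])
  simp only [map_mul, mk_of] at h
  rw [eq_inv_mul_of_mul_eq h]
  group

lemma g₁_eq' : g₁ = g₀⁻¹ * e₀⁻¹ * e₀⁻¹ := by
  have h := one_of_mem (rels := stmt11Rels)
    (x := FreeGroup.of 4 * (FreeGroup.of 5 * FreeGroup.of 5) * FreeGroup.of 1)
    (by simp [stmt11Rels])
  simp only [map_mul, mk_of, e₁_eq] at h
  rw [eq_mul_inv_of_mul_eq (eq_inv_of_mul_eq_one_left h)]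
  group

lemma commute_e₀_g₀ : Commute e₀ g₀ := by
  have h := one_of_mem (rels := stmt11Rels)
    (x := FreeGroup.of 2 * FreeGroup.of 4 * FreeGroup.of 5 * FreeGroup.of 1)
    (by simp [stmt11Rels])
  simp only [map_mul, mk_of, e₁_eq, g₁_eq'] at h
  have : Commute e₀ g₀⁻¹ :=
    calc e₀ * g₀⁻¹ = (e₀ * (g₀⁻¹ * e₀⁻¹ * e₀⁻¹) * e₀ * g₀) * (g₀⁻¹ * e₀) := by group
      _ = g₀⁻¹ * e₀ := by rw [h, one_mul]
  simpa using this.inv_right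

def generatorImage : Fin 6 → Multiplicative (ℤ × ℤ) :=
  ![.ofAdd (2, 0), .ofAdd (0, 1), .ofAdd (1, 0), .ofAdd (0, 0), .ofAdd (-2, -1), .ofAdd (1, 0)]

lemma lift_generatorImage_eq_one : ∀ r ∈ stmt11Rels, FreeGroup.lift generatorImage r = 1 := by
  simp only [stmt11Rels, Set.mem_insert_iff, Set.mem_singleton_iff]
  rintro r (rfl | rfl | rfl | rfl | rfl | rfl | rfl | rfl | rfl | rfl | rfl) <;>
    simp [generatorImage, ← ofAdd_add, ← ofAdd_neg]

noncomputable def toProd : P →* Multiplicative (ℤ × ℤ) :=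
  toGroup lift_generatorImage_eq_one

@[simp]
lemma toProd_of (i : Fin 6) : toProd (of i) = generatorImage i :=
  toGroup.of _

lemma zpowPairHom_comp_toProd : commute_e₀_g₀.zpowPairHom.comp toProd = MonoidHom.id P := by
  refine PresentedGroup.ext fun i => ?_
  fin_cases i <;> simp [generatorImage, c₀_eq, c₁_eq_one, e₁_eq, g₁_eq]

lemma toProd_comp_zpowPairHom :
    toProd.comp commute_e₀_g₀.zpowPairHom = MonoidHom.id (Multiplicative (ℤ × ℤ)) := by
  refine MonoidHom.ext fun p => ?_
  obtain ⟨⟨m, n⟩, rfl⟩ := Multiplicative.ofAdd.surjective p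
  simp [generatorImage, ← ofAdd_zsmul, ← ofAdd_add]

noncomputable def equivProd : P ≃* Multiplicative (ℤ × ℤ) :=
  toProd.toMulEquiv _ zpowPairHom_comp_toProd toProd_comp_zpowPairHom

end Stmt11

open Stmt11 in
/-- The group `P` presented by the above relators is isomorphic to `ℤ × ℤ`, with the images
of `e₀` and `g₀` forming a basis; in particular, in `P` one has `c₀ = e₀²`, `e₁ = e₀` and
`g₁ = e₀⁻²g₀⁻¹`. -/
theorem stmt11 :
    (∃ e : PresentedGroup stmt11Rels ≃* Multiplicative (ℤ × ℤ),
      e (PresentedGroup.of 2) = Multiplicative.ofAdd (1, 0) ∧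
      e (PresentedGroup.of 1) = Multiplicative.ofAdd (0, 1)) ∧
    (PresentedGroup.of (rels := stmt11Rels) 0 =
      PresentedGroup.of 2 * PresentedGroup.of 2) ∧
    (PresentedGroup.of (rels := stmt11Rels) 5 = PresentedGroup.of 2) ∧
    (PresentedGroup.of (rels := stmt11Rels) 4 =
      (PresentedGroup.of 2)⁻¹ * (PresentedGroup.of 2)⁻¹ * (PresentedGroup.of 1)⁻¹) :=
  ⟨⟨equivProd, toProd_of 2, toProd_of 1⟩, c₀_eq, e₁_eq, g₁_eq⟩
end
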